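/- Let W be a Morse sequence on K and let σ, τ be critical faces of W. Then σ ∈ ∂̂(τ) if and only if τ ∈ δ̂(σ), where ∂̂ and δ̂ are the boundary and coboundary operators of the critical and cocritical complexes of W. -/
import Mathlib


/-! ## Basic notions: simplicial complexes, collapses, expansions, fillings -/

variable {V : Type*} [DecidableEq V]

/-- A (finite) simplicial complex: a finite collection of nonempty finite sets that is
closed under taking nonempty subsets. -/
def IsComplex (K : Finset (Finset V)) : Prop :=
  ∀ τ ∈ K, τ.Nonempty ∧ ∀ σ, σ ⊆ τ → σ.Nonempty → σ ∈ K

/-- `ν` is a facet (inclusion-maximal face) of `K`. -/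
def IsFacet (K : Finset (Finset V)) (ν : Finset V) : Prop :=
  ν ∈ K ∧ ∀ ρ ∈ K, ν ⊆ ρ → ρ = ν

/-- `(σ, τ)` is a free pair for `K`: `σ ⊊ τ` and `τ` is the only face of `K`
strictly containing `σ`. -/
def IsFreePair (K : Finset (Finset V)) (σ τ : Finset V) : Prop :=
  σ ∈ K ∧ τ ∈ K ∧ σ ⊂ τ ∧ ∀ ρ ∈ K, σ ⊂ ρ → ρ = τ

/-- `K` is an elementary expansion of `L` (equivalently, `L` is an elementary collapse
of `K`): `L = K \ {σ, τ}` for some free pair `(σ, τ)` of `K`. -/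
def ElemExpansion (L K : Finset (Finset V)) : Prop :=
  ∃ σ τ, IsFreePair K σ τ ∧ L = K \ {σ, τ}

/-- `K` is an elementary filling of `L` (equivalently, `L` is an elementary perforation
of `K`): `L = K \ {ν}` for some facet `ν` of `K`. -/
def ElemFilling (L K : Finset (Finset V)) : Prop :=
  ∃ ν, IsFacet K ν ∧ L = K \ {ν}

/-- `L` is an elementary collapse of `K`. -/
def ElemCollapse (K L : Finset (Finset V)) : Prop :=
  ∃ σ τ, IsFreePair K σ τ ∧ L = K \ {σ, τ}

/-- `K` collapses onto `L`: there is a sequence of elementary collapses from `K` to `L`. -/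
def CollapsesOnto (K L : Finset (Finset V)) : Prop :=
  Relation.ReflTransGen ElemCollapse K L

/-! ## Morse sequences -/

/-- A Morse sequence `⟨∅ = K₀, …, K_k = K⟩`: each `K_i` is a simplicial complex that is
an elementary expansion or an elementary filling of `K_{i-1}`. -/
structure MorseSeq (V : Type*) [DecidableEq V] where
  k : ℕ
  seq : ℕ → Finset (Finset V)
  cpx : ∀ i ≤ k, IsComplex (seq i)
  init : seq 0 = ∅
  step : ∀ i, 1 ≤ i → i ≤ k → ElemExpansion (seq (i - 1)) (seq i) ∨ ElemFilling (seq (i - 1)) (seq i)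

/-- The simplicial complex `K = K_k` on which the Morse sequence lives. -/
def MorseSeq.cplx (W : MorseSeq V) : Finset (Finset V) := W.seq W.k

/-- A face added by a filling step: a critical face of `W`. -/
def MorseSeq.Critical (W : MorseSeq V) (ν : Finset V) : Prop :=
  ∃ i, 1 ≤ i ∧ i ≤ W.k ∧ W.seq i \ W.seq (i - 1) = {ν}

/-- `(σ, τ)` is a regular pair for `W`: the two faces are added together by an
elementary expansion step. -/
def MorseSeq.Regular (W : MorseSeq V) (σ τ : Finset V) : Prop :=
  ∃ i, 1 ≤ i ∧ i ≤ W.k ∧ σ ⊂ τ ∧ W.seq i \ W.seq (i - 1) = {σ, τ}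

/-- `σ` is lower regular for `W`. -/
def MorseSeq.LowerRegular (W : MorseSeq V) (σ : Finset V) : Prop := ∃ τ, W.Regular σ τ

/-- `τ` is upper regular for `W`. -/
def MorseSeq.UpperRegular (W : MorseSeq V) (τ : Finset V) : Prop := ∃ σ, W.Regular σ τ

/-! ## Chains modulo 2 -/

/-- The boundary `∂(σ)` of a simplex: the chain of its (nonempty) codimension-one faces. -/
def bd (σ : Finset V) : Finset (Finset V) :=
  σ.powerset.filter fun ρ => ρ.Nonempty ∧ ρ.card + 1 = σ.card

/-- The coboundary `δ(σ)` of a simplex in `K`: the chain of faces of `K` of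
codimension one over `σ` containing `σ`. -/
def cobd (K : Finset (Finset V)) (σ : Finset V) : Finset (Finset V) :=
  K.filter fun τ => σ ⊆ τ ∧ σ.card + 1 = τ.card

/-- Mod-2 linear extension: `chainSum c f` is the sum (symmetric difference) of
the chains `f σ` over `σ ∈ c`; an element belongs to it iff it belongs to an odd
number of the `f σ`. -/
def chainSum (c : Finset (Finset V)) (f : Finset V → Finset (Finset V)) : Finset (Finset V) :=
  (c.biUnion f).filter fun ν => (c.filter fun σ => ν ∈ f σ).card % 2 = 1

/-- `c` is a `p`-chain of `K`: a set of `p`-simplices of `K`. -/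
def IsChainOf (K : Finset (Finset V)) (p : ℕ) (c : Finset (Finset V)) : Prop :=
  ∀ ν ∈ c, ν ∈ K ∧ ν.card = p + 1

/-- `c` is a chain of critical `p`-simplices of `W` (an element of `Ŵ[p]`). -/
def IsCritChain (W : MorseSeq V) (p : ℕ) (c : Finset (Finset V)) : Prop :=
  ∀ ν ∈ c, W.Critical ν ∧ ν.card = p + 1

/-! ## Frames, reference and coreference maps -/

/-- A frame on `W`: it assigns to each `p`-simplex of `K` a chain of critical
`p`-simplices of `W`. -/
def IsFrame (W : MorseSeq V) (Υ : Finset V → Finset (Finset V)) : Prop :=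
  ∀ ν ∈ W.cplx, ∀ μ ∈ Υ ν, W.Critical μ ∧ μ.card = ν.card

/-- `Λ` is the reference map of `W`: a frame with `Λ(ν) = ν` for critical `ν`, and
`Λ(τ) = 0`, `Λ(∂τ) = 0` for upper regular `τ`. -/
def IsRefMap (W : MorseSeq V) (Λ : Finset V → Finset (Finset V)) : Prop :=
  IsFrame W Λ ∧ (∀ ν, W.Critical ν → Λ ν = {ν}) ∧
    ∀ τ, W.UpperRegular τ → Λ τ = ∅ ∧ chainSum (bd τ) Λ = ∅

/-- `Λ` is the coreference map of `W`: a frame with `Λ(ν) = ν` for critical `ν`, and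
`Λ(σ) = 0`, `Λ(δσ) = 0` for lower regular `σ`. -/
def IsCorefMap (W : MorseSeq V) (Λ : Finset V → Finset (Finset V)) : Prop :=
  IsFrame W Λ ∧ (∀ ν, W.Critical ν → Λ ν = {ν}) ∧
    ∀ σ, W.LowerRegular σ → Λ σ = ∅ ∧ chainSum (cobd W.cplx σ) Λ = ∅

/-- The extension map `∧̃` of `W` (defined from the coreference map `Vee`):
`∧̃(κ) = {ν ∈ K | κ ∈ ∨(ν)}`. -/
def extMap (W : MorseSeq V) (Vee : Finset V → Finset (Finset V)) (κ : Finset V) :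
    Finset (Finset V) :=
  W.cplx.filter fun ν => κ ∈ Vee ν

/-- The coextension map `∨̃` of `W` (defined from the reference map `Λ`):
`∨̃(κ) = {ν ∈ K | κ ∈ ∧(ν)}`. -/
def coextMap (W : MorseSeq V) (Λ : Finset V → Finset (Finset V)) (κ : Finset V) :
    Finset (Finset V) :=
  W.cplx.filter fun ν => κ ∈ Λ ν

/-! ## Auxiliary lemmas -/

lemma mem_chainSum {c : Finset (Finset V)} {f : Finset V → Finset (Finset V)} {ν : Finset V} :
    ν ∈ chainSum c f ↔ (c.filter fun σ => ν ∈ f σ).card % 2 = 1 := by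
  unfold chainSum
  simp only [Finset.mem_filter, Finset.mem_biUnion]
  constructor
  · rintro ⟨_, h⟩; exact h
  · intro h
    refine ⟨?_, h⟩
    have hne : (c.filter fun σ => ν ∈ f σ).Nonempty := by
      rw [Finset.nonempty_iff_ne_empty]
      intro he; rw [he] at h; simp at h
    obtain ⟨σ', hσ'⟩ := hne
    rw [Finset.mem_filter] at hσ'
    exact ⟨σ', hσ'.1, hσ'.2⟩

lemma MorseSeq.seq_subset_succ (W : MorseSeq V) {i : ℕ} (h1 : 1 ≤ i) (h2 : i ≤ W.k) :
    W.seq (i - 1) ⊆ W.seq i := by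
  rcases W.step i h1 h2 with ⟨σ, τ, _, hL⟩ | ⟨ν, _, hL⟩ <;> rw [hL] <;>
    exact Finset.sdiff_subset

lemma MorseSeq.seq_mono (W : MorseSeq V) :
    ∀ j i, i + j ≤ W.k → W.seq i ⊆ W.seq (i + j) := by
  intro j
  induction j with
  | zero => intro i _; simp [Finset.Subset.refl]
  | succ n ih =>
    intro i h
    have h1 : W.seq i ⊆ W.seq (i + n) := ih i (by omega)
    have h2 : W.seq (i + n + 1 - 1) ⊆ W.seq (i + n + 1) :=
      W.seq_subset_succ (by omega) (by omega)
    simp only [Nat.add_sub_cancel] at h2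
    exact fun x hx => by
      have : x ∈ W.seq (i + n + 1) := h2 (h1 hx)
      simpa [Nat.add_assoc] using this

lemma MorseSeq.seq_subset_cplx (W : MorseSeq V) {i : ℕ} (h : i ≤ W.k) :
    W.seq i ⊆ W.cplx := by
  have := W.seq_mono (W.k - i) i (by omega)
  rw [show i + (W.k - i) = W.k by omega] at this
  exact this

lemma MorseSeq.Critical.mem_cplx {W : MorseSeq V} {ν : Finset V} (h : W.Critical ν) :
    ν ∈ W.cplx := by
  obtain ⟨i, h1, h2, hd⟩ := h
  have hmem : ν ∈ W.seq i := by
    have : ν ∈ W.seq i \ W.seq (i - 1) := by rw [hd]; simp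
    exact (Finset.mem_sdiff.mp this).1
  exact W.seq_subset_cplx h2 hmem

/-- Every face of `K` is critical, lower regular, or upper regular. -/
lemma MorseSeq.classify (W : MorseSeq V) {ν : Finset V} (h : ν ∈ W.cplx) :
    W.Critical ν ∨ W.LowerRegular ν ∨ W.UpperRegular ν := by
  have hex : ∃ i, ν ∈ W.seq i := ⟨W.k, h⟩
  classical
  set i := Nat.find hex with hi
  have hmem : ν ∈ W.seq i := Nat.find_spec hex
  have h1 : 1 ≤ i := by
    rcases Nat.eq_zero_or_pos i with h0 | h0
    · exfalso; rw [h0] at hmem; rw [W.init] at hmem; simp at hmem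
    · exact h0
  have h2 : i ≤ W.k := Nat.find_le h
  have hnot : ν ∉ W.seq (i - 1) := Nat.find_min hex (by omega)
  have hdiff : ν ∈ W.seq i \ W.seq (i - 1) := Finset.mem_sdiff.mpr ⟨hmem, hnot⟩
  rcases W.step i h1 h2 with ⟨σ, τ, hfp, hL⟩ | ⟨μ, hfc, hL⟩
  · obtain ⟨hσK, hτK, hst, _⟩ := hfp
    have hd : W.seq i \ W.seq (i - 1) = {σ, τ} := by
      rw [hL, sdiff_sdiff_right_self, Finset.inf_eq_inter]
      apply Finset.inter_eq_right.mpr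
      intro x hx
      rcases Finset.mem_insert.mp hx with rfl | hx
      · exact hσK
      · rw [Finset.mem_singleton] at hx; subst hx; exact hτK
    rw [hd] at hdiff
    rcases Finset.mem_insert.mp hdiff with rfl | hdiff
    · exact Or.inr (Or.inl ⟨τ, i, h1, h2, hst, hd⟩)
    · rw [Finset.mem_singleton] at hdiff; subst hdiff
      exact Or.inr (Or.inr ⟨σ, i, h1, h2, hst, hd⟩)
  · have hd : W.seq i \ W.seq (i - 1) = {μ} := by
      rw [hL, sdiff_sdiff_right_self, Finset.inf_eq_inter]
      apply Finset.inter_eq_right.mpr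
      intro x hx
      rw [Finset.mem_singleton] at hx; subst hx; exact hfc.1
    rw [hd, Finset.mem_singleton] at hdiff; subst hdiff
    exact Or.inl ⟨i, h1, h2, hd⟩

lemma bd_subset_of_mem {K : Finset (Finset V)} (hK : IsComplex K) {ν : Finset V}
    (hν : ν ∈ K) : bd ν ⊆ K := by
  intro ρ hρ
  rw [bd, Finset.mem_filter, Finset.mem_powerset] at hρ
  exact (hK ν hν).2 ρ hρ.1 hρ.2.1

lemma mem_bd_iff_mem_cobd {K : Finset (Finset V)} (hK : IsComplex K) {ρ ν : Finset V}
    (hρ : ρ ∈ K) (hν : ν ∈ K) : ρ ∈ bd ν ↔ ν ∈ cobd K ρ := by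
  rw [bd, cobd, Finset.mem_filter, Finset.mem_filter, Finset.mem_powerset]
  constructor
  · rintro ⟨hsub, _, hcard⟩; exact ⟨hν, hsub, hcard⟩
  · rintro ⟨_, hsub, hcard⟩; exact ⟨hsub, (hK ρ hρ).1, hcard⟩

lemma natCast_zmod_two_eq (n m : ℕ) (h : (n : ZMod 2) = (m : ZMod 2)) :
    n % 2 = m % 2 :=
  (ZMod.natCast_eq_natCast_iff n m 2).mp h

/-- For critical faces `σ, τ` of `W`: `σ ∈ ∂̂(τ)` iff `τ ∈ δ̂(σ)`,
where `∂̂(τ) = ∧(∂(τ))` and `δ̂(σ) = ∨(δ(σ))`. -/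
theorem critical_boundary_coboundary_duality (W : MorseSeq V)
    (Λ Vee : Finset V → Finset (Finset V))
    (hΛ : IsRefMap W Λ) (hV : IsCorefMap W Vee)
    (σ τ : Finset V) (hσ : W.Critical σ) (hτ : W.Critical τ) :
    σ ∈ chainSum (bd τ) Λ ↔ τ ∈ chainSum (cobd W.cplx σ) Vee := by
  classical
  set K := W.cplx with hKdef
  have hK : IsComplex K := W.cpx W.k le_rfl
  have hσK : σ ∈ K := hσ.mem_cplx
  have hτK : τ ∈ K := hτ.mem_cplx
  set cnt1 : Finset V → ℕ := fun ν => ((bd ν).filter fun ρ => σ ∈ Λ ρ).card with hcnt1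
  set cnt2 : Finset V → ℕ := fun ρ => ((cobd K ρ).filter fun ν => τ ∈ Vee ν).card with hcnt2
  -- the double sum
  set S : ZMod 2 :=
    ∑ ν ∈ K, ∑ ρ ∈ K, if ρ ∈ bd ν ∧ σ ∈ Λ ρ ∧ τ ∈ Vee ν then 1 else 0 with hS
  -- first evaluation: S = cnt1 τ
  have hway1 : S = (cnt1 τ : ZMod 2) := by
    have hstep : S = ∑ ν ∈ K, if ν = τ then (cnt1 τ : ZMod 2) else 0 := by
      rw [hS]
      apply Finset.sum_congr rfl
      intro ν hν
      have hinner : (∑ ρ ∈ K, if ρ ∈ bd ν ∧ σ ∈ Λ ρ ∧ τ ∈ Vee ν then (1 : ZMod 2) else 0)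
          = if τ ∈ Vee ν then (cnt1 ν : ZMod 2) else 0 := by
        by_cases hτν : τ ∈ Vee ν
        · rw [if_pos hτν]
          have : (∑ ρ ∈ K, if ρ ∈ bd ν ∧ σ ∈ Λ ρ ∧ τ ∈ Vee ν then (1 : ZMod 2) else 0)
              = ∑ ρ ∈ K, if ρ ∈ bd ν ∧ σ ∈ Λ ρ then (1 : ZMod 2) else 0 := by
            apply Finset.sum_congr rfl; intro ρ _
            by_cases h : ρ ∈ bd ν ∧ σ ∈ Λ ρ
            · rw [if_pos ⟨h.1, h.2, hτν⟩, if_pos h]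
            · rw [if_neg (fun hc => h ⟨hc.1, hc.2.1⟩), if_neg h]
          rw [this, Finset.sum_boole]
          congr 1
          rw [hcnt1]
          congr 1
          ext ρ
          simp only [Finset.mem_filter]
          constructor
          · rintro ⟨_, h1, h2⟩; exact ⟨h1, h2⟩
          · rintro ⟨h1, h2⟩; exact ⟨bd_subset_of_mem hK hν h1, h1, h2⟩
        · rw [if_neg hτν]
          apply Finset.sum_eq_zero
          intro ρ _
          rw [if_neg (fun hc => hτν hc.2.2)]
      rw [hinner]
      -- now case on the classification of ν
      rcases W.classify hν with hcrit | hlr | hur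
      · have hVν : Vee ν = {ν} := hV.2.1 ν hcrit
        by_cases hντ : ν = τ
        · subst hντ
          rw [if_pos rfl, if_pos (by rw [hVν]; exact Finset.mem_singleton_self ν)]
        · rw [if_neg hντ, if_neg (by rw [hVν, Finset.mem_singleton]; exact fun h => hντ h.symm)]
      · have hVν : Vee ν = ∅ := (hV.2.2 ν hlr).1
        rw [if_neg (by rw [hVν]; exact Finset.notMem_empty τ)]
        by_cases hντ : ν = τ
        · exfalso
          subst hντ
          have h1 : Vee ν = {ν} := hV.2.1 ν hτ
          rw [hVν] at h1
          exact Finset.singleton_ne_empty ν h1.symm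
        · rw [if_neg hντ]
      · have hcs : chainSum (bd ν) Λ = ∅ := (hΛ.2.2 ν hur).2
        have heven : cnt1 ν % 2 = 0 := by
          have : σ ∉ chainSum (bd ν) Λ := by rw [hcs]; exact Finset.notMem_empty σ
          rw [mem_chainSum] at this
          simp only [hcnt1]
          omega
        have hzero : (cnt1 ν : ZMod 2) = 0 := by
          rw [← ZMod.natCast_mod, heven, Nat.cast_zero]
        by_cases hντ : ν = τ
        · rw [if_pos hντ, ← hντ, hzero]
          split <;> rfl
        · rw [if_neg hντ]
          by_cases h : τ ∈ Vee ν
          · rw [if_pos h, hzero]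
          · rw [if_neg h]
    rw [hstep, Finset.sum_ite_eq' K τ (fun _ => (cnt1 τ : ZMod 2)), if_pos hτK]
  -- second evaluation: S = cnt2 σ
  have hway2 : S = (cnt2 σ : ZMod 2) := by
    have hswap : S = ∑ ρ ∈ K, ∑ ν ∈ K,
        if ρ ∈ bd ν ∧ σ ∈ Λ ρ ∧ τ ∈ Vee ν then (1 : ZMod 2) else 0 := by
      rw [hS]; exact Finset.sum_comm
    have hstep : S = ∑ ρ ∈ K, if ρ = σ then (cnt2 σ : ZMod 2) else 0 := by
      rw [hswap]
      apply Finset.sum_congr rfl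
      intro ρ hρ
      have hinner : (∑ ν ∈ K, if ρ ∈ bd ν ∧ σ ∈ Λ ρ ∧ τ ∈ Vee ν then (1 : ZMod 2) else 0)
          = if σ ∈ Λ ρ then (cnt2 ρ : ZMod 2) else 0 := by
        by_cases hσρ : σ ∈ Λ ρ
        · rw [if_pos hσρ]
          have : (∑ ν ∈ K, if ρ ∈ bd ν ∧ σ ∈ Λ ρ ∧ τ ∈ Vee ν then (1 : ZMod 2) else 0)
              = ∑ ν ∈ K, if ρ ∈ bd ν ∧ τ ∈ Vee ν then (1 : ZMod 2) else 0 := by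
            apply Finset.sum_congr rfl; intro ν _
            by_cases h : ρ ∈ bd ν ∧ τ ∈ Vee ν
            · rw [if_pos ⟨h.1, hσρ, h.2⟩, if_pos h]
            · rw [if_neg (fun hc => h ⟨hc.1, hc.2.2⟩), if_neg h]
          rw [this, Finset.sum_boole]
          congr 1
          rw [hcnt2]
          congr 1
          ext ν
          simp only [Finset.mem_filter]
          constructor
          · rintro ⟨hνK, h1, h2⟩
            exact ⟨(mem_bd_iff_mem_cobd hK hρ hνK).mp h1, h2⟩
          · rintro ⟨h1, h2⟩
            have hνK : ν ∈ K := by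
              rw [cobd, Finset.mem_filter] at h1; exact h1.1
            exact ⟨hνK, (mem_bd_iff_mem_cobd hK hρ hνK).mpr h1, h2⟩
        · rw [if_neg hσρ]
          apply Finset.sum_eq_zero
          intro ν _
          rw [if_neg (fun hc => hσρ hc.2.1)]
      rw [hinner]
      rcases W.classify hρ with hcrit | hlr | hur
      · have hΛρ : Λ ρ = {ρ} := hΛ.2.1 ρ hcrit
        by_cases hρσ : ρ = σ
        · subst hρσ
          rw [if_pos rfl, if_pos (by rw [hΛρ]; exact Finset.mem_singleton_self ρ)]
        · rw [if_neg hρσ, if_neg (by rw [hΛρ, Finset.mem_singleton]; exact fun h => hρσ h.symm)]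
      · have hcs : chainSum (cobd K ρ) Vee = ∅ := (hV.2.2 ρ hlr).2
        have heven : cnt2 ρ % 2 = 0 := by
          have : τ ∉ chainSum (cobd K ρ) Vee := by rw [hcs]; exact Finset.notMem_empty τ
          rw [mem_chainSum] at this
          simp only [hcnt2]
          omega
        have hzero : (cnt2 ρ : ZMod 2) = 0 := by
          rw [← ZMod.natCast_mod, heven, Nat.cast_zero]
        by_cases hρσ : ρ = σ
        · rw [if_pos hρσ, ← hρσ, hzero]
          split <;> rfl
        · rw [if_neg hρσ]
          by_cases h : σ ∈ Λ ρ
          · rw [if_pos h, hzero]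
          · rw [if_neg h]
      · have hΛρ : Λ ρ = ∅ := (hΛ.2.2 ρ hur).1
        rw [if_neg (by rw [hΛρ]; exact Finset.notMem_empty σ)]
        by_cases hρσ : ρ = σ
        · exfalso
          subst hρσ
          have h1 : Λ ρ = {ρ} := hΛ.2.1 ρ hσ
          rw [hΛρ] at h1
          exact Finset.singleton_ne_empty ρ h1.symm
        · rw [if_neg hρσ]
    rw [hstep, Finset.sum_ite_eq' K σ (fun _ => (cnt2 σ : ZMod 2)), if_pos hσK]
  have hmod : cnt1 τ % 2 = cnt2 σ % 2 :=
    natCast_zmod_two_eq _ _ (by rw [← hway1, hway2])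
  rw [mem_chainSum, mem_chainSum]
  constructor
  · intro h
    have : cnt1 τ % 2 = 1 := h
    rw [hmod] at this
    exact this
  · intro h
    have : cnt2 σ % 2 = 1 := h
    rw [← hmod] at this
    exact this
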